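/- Chaitin's incompleteness theorem: for every consistent, recursively enumerable, arithmetically sound-for-Σ₁ theory T that can express statements 'K(x) > c', there is a constant c_T such that for all x, T does not prove 'K(x) > c_T'. -/

import Mathlib

/-- The e-th partial recursive function. -/
def phi (e : ℕ) : ℕ →. ℕ := (Denumerable.ofNat Nat.Partrec.Code e).eval

/-- A predicate on ℕ is recursively enumerable if it is the domain of a
partial recursive function. -/
def REPredNat (p : ℕ → Prop) : Prop :=
  ∃ f : ℕ →. ℕ, Partrec f ∧ ∀ n, p n ↔ (f n).Dom

/-- Kolmogorov complexity: the least index `e` such that φ_e(0) = x. -/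
noncomputable def Kc (x : ℕ) : ℕ := sInf {e | x ∈ phi e 0}

/-!
If `T` proved `K(x) > c` for arbitrarily large `c`, a program could search through the
theorems of `T` for one of the form `K(x) > c` and print that `x`. By the recursion theorem
such a program can be given its own index `e` as the bound `c`: whatever `x` it prints then has
`K(x) ≤ e`, while `T` proved `K(x) > e`, contradicting soundness.
-/

open Nat.Partrec

theorem Partrec.exists_primrec_dom_iff {f : ℕ →. ℕ} (hf : Partrec f) :
    ∃ halts : ℕ → ℕ → Bool, Primrec₂ halts ∧ ∀ n, (f n).Dom ↔ ∃ k, halts k n := by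
  obtain ⟨cf, rfl⟩ := Code.exists_code.1 (Partrec.nat_iff.1 hf)
  refine ⟨fun k n => (cf.evaln k n).isSome, ?_, fun n => ?_⟩
  · exact Primrec.option_isSome.comp
      (Code.primrec_evaln.comp ((Primrec.fst.pair (Primrec.const cf)).pair Primrec.snd))
  · simp only [Part.dom_iff_mem, Code.evaln_complete, Option.isSome_iff_exists, Option.mem_def]
    exact exists_comm

theorem REPredNat.exists_partrec_selector {R : ℕ → ℕ → Prop}
    (hR : REPredNat fun p => R p.unpair.1 p.unpair.2) :
    ∃ g : ℕ →. ℕ, Partrec g ∧ (∀ c x, x ∈ g c → R x c) ∧ ∀ c x, R x c → (g c).Dom := by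
  obtain ⟨f, hf, hRf⟩ := hR
  obtain ⟨halts, hhalts, hdom⟩ := hf.exists_primrec_dom_iff
  have hR_iff : ∀ x c, R x c ↔ ∃ k, halts k (Nat.pair x c) := fun x c => by
    simpa using (hRf (Nat.pair x c)).trans (hdom _)
  -- `m` codes a pair `(k, x)`: a step bound and a candidate witness.
  let search (c m : ℕ) : Option ℕ :=
    bif halts m.unpair.1 (Nat.pair m.unpair.2 c) then some m.unpair.2 else none
  have hsearch : Primrec₂ search :=
    Primrec.cond
      (hhalts.comp (Primrec.fst.comp (Primrec.unpair.comp Primrec.snd))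
        (Primrec₂.natPair.comp (Primrec.snd.comp (Primrec.unpair.comp Primrec.snd)) Primrec.fst))
      (Primrec.option_some.comp (Primrec.snd.comp (Primrec.unpair.comp Primrec.snd)))
      (Primrec.const none)
  refine ⟨fun c => Nat.rfindOpt (search c), Partrec.rfindOpt hsearch.to_comp, ?_, ?_⟩
  · intro c x hx
    obtain ⟨m, hm⟩ := Nat.rfindOpt_spec hx
    simp only [search, Option.mem_def, cond_eq_ite] at hm
    split_ifs at hm with hk
    exact (hR_iff x c).2 ⟨m.unpair.1, by simpa [Option.some_inj.1 hm] using hk⟩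
  · intro c x hx
    obtain ⟨k, hk⟩ := (hR_iff x c).1 hx
    exact Nat.rfindOpt_dom.2 ⟨Nat.pair k x, x, by simp [search, hk]⟩

theorem exists_index_phi_eq {g : ℕ →. ℕ} (hg : Partrec g) : ∃ e, phi e 0 = g e := by
  obtain ⟨cd, hcd⟩ := Code.fixed_point₂ (f := fun cd (_ : ℕ) => g (Encodable.encode cd))
    (hg.comp (Computable.encode.comp Computable.fst))
  exact ⟨Encodable.encode cd, by simp [phi, hcd]⟩

theorem Kc_le_of_mem_phi {x e : ℕ} (h : x ∈ phi e 0) : Kc x ≤ e :=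
  Nat.sInf_le h

theorem exists_Kc_le_of_mem {g : ℕ →. ℕ} (hg : Partrec g) : ∃ e, ∀ x ∈ g e, Kc x ≤ e := by
  obtain ⟨e, he⟩ := exists_index_phi_eq hg
  exact ⟨e, fun x hx => Kc_le_of_mem_phi (he ▸ hx)⟩

/-- Chaitin's incompleteness theorem: if `Prv x c` expresses that the consistent,
recursively enumerable theory `T` proves "K(x) > c" (this set of provable sentences
being r.e. and sound: everything `T` proves of this form is true), then there is a
constant `c_T` such that `T` proves "K(x) > c_T" for no `x`. -/
theorem chaitin_incompleteness
    (Prv : ℕ → ℕ → Prop)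
    (hre : REPredNat (fun p => Prv p.unpair.1 p.unpair.2))
    (hsound : ∀ x c, Prv x c → c < Kc x) :
    ∃ cT : ℕ, ∀ x, ¬ Prv x cT := by
  obtain ⟨g, hg, hg_prv, hg_dom⟩ := hre.exists_partrec_selector
  obtain ⟨e, he⟩ := exists_Kc_le_of_mem hg
  refine ⟨e, fun x hx => ?_⟩
  have hy : (g e).get (hg_dom e x hx) ∈ g e := Part.get_mem _
  exact (hsound _ e (hg_prv e _ hy)).not_ge (he _ hy)
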